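/- arXiv:2104.06426 — 6 statements merged into one kernel-verified Lean document; each statement's English description precedes it below -/
import Mathlib

section
/- Let p be an odd prime, j ≥ 0, m > 1 with gcd(p, m) = 1, and n = p^{j+1}m. Define x_0(α) = ⊕_{i=0}^{m-1} α^{i·p^{j+1}} and x(α) = (1 + α^{p^j})·x_0(α) in GF(2)[α]/(α^n + 1). Then x(α) ≠ 0 and (1 + α^{p^{j+1}})·x(α) = 0. -/
open Polynomial Finset

abbrev R2 (n : ℕ) : Type :=
  Polynomial (ZMod 2) ⧸ Ideal.span {(X : Polynomial (ZMod 2)) ^ n + 1}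

noncomputable def pr (n : ℕ) : Polynomial (ZMod 2) →+* R2 n :=
  Ideal.Quotient.mk _

theorem stmt_2 (p j m n : ℕ) (hp : p.Prime) (hodd : Odd p) (hm : 1 < m)
    (hco : Nat.Coprime p m) (hn : n = p ^ (j + 1) * m) :
    pr n ((1 + X ^ p ^ j) * ∑ i ∈ Finset.range m, X ^ (i * p ^ (j + 1))) ≠ 0 ∧
      pr n (1 + X ^ p ^ (j + 1)) *
        pr n ((1 + X ^ p ^ j) * ∑ i ∈ Finset.range m, X ^ (i * p ^ (j + 1))) = 0 := by
  have hp1 : 1 < p := hp.one_lt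
  have hpj : 0 < p ^ j := pow_pos hp.pos j
  have hpj1 : 0 < p ^ (j + 1) := pow_pos hp.pos _
  have hjlt : p ^ j < p ^ (j + 1) := pow_lt_pow_right₀ hp1 (Nat.lt_succ_self j)
  have hn0 : 0 < n := by
    subst hn; exact Nat.mul_pos hpj1 (lt_trans one_pos hm)
  set S : Polynomial (ZMod 2) := ∑ i ∈ Finset.range m, X ^ (i * p ^ (j + 1)) with hS
  have key : (1 + X ^ p ^ (j + 1)) * S = X ^ n + 1 := by
    have h1 : S = ∑ i ∈ Finset.range m, ((X : Polynomial (ZMod 2)) ^ p ^ (j + 1)) ^ i := by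
      refine Finset.sum_congr rfl fun i _ => ?_
      rw [← pow_mul, mul_comm]
    rw [h1, add_comm, ← CharTwo.sub_eq_add (X ^ p ^ (j+1)) 1, mul_comm, geom_sum_mul,
      ← pow_mul, ← hn, CharTwo.sub_eq_add]
  constructor
  · intro h0
    have hdvd : ((X : Polynomial (ZMod 2)) ^ n + 1) ∣ (1 + X ^ p ^ j) * S := by
      rw [← Ideal.mem_span_singleton]
      exact (Ideal.Quotient.eq_zero_iff_mem).mp h0
    have h1 : (1 + (X : Polynomial (ZMod 2)) ^ p ^ j) ≠ 0 := by
      intro h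
      have := congrArg (fun q => Polynomial.coeff q (p ^ j)) h
      simp [coeff_X_pow, coeff_one, hpj.ne', hp.ne_zero] at this
    have hS0 : S ≠ 0 := by
      intro h
      have := congrArg (fun q => Polynomial.coeff q 0) h
      simp only [hS, finset_sum_coeff, coeff_X_pow, coeff_zero] at this
      rw [Finset.sum_eq_single 0] at this
      · simp at this
      · intro i hi hi0
        have : i * p ^ (j+1) ≠ 0 := Nat.mul_ne_zero hi0 hpj1.ne'
        simp [Ne.symm this]
      · intro h; simp at h; omega
    have hf0 : (1 + (X : Polynomial (ZMod 2)) ^ p ^ j) * S ≠ 0 := mul_ne_zero h1 hS0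
    have hdeg : ((1 + (X : Polynomial (ZMod 2)) ^ p ^ j) * S).natDegree ≤
        p ^ j + (m - 1) * p ^ (j + 1) := by
      refine (natDegree_mul_le).trans (Nat.add_le_add ?_ ?_)
      · refine (natDegree_add_le _ _).trans ?_
        simp [natDegree_X_pow]
      · refine natDegree_sum_le_of_forall_le _ _ fun i hi => ?_
        rw [natDegree_X_pow]
        exact Nat.mul_le_mul_right _ (by simp at hi; omega)
    have hle : n ≤ ((1 + (X : Polynomial (ZMod 2)) ^ p ^ j) * S).natDegree := by
      have hXn : ((X : Polynomial (ZMod 2)) ^ n + 1).natDegree = n := by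
        rw [← C_1, natDegree_X_pow_add_C]
      calc n = ((X : Polynomial (ZMod 2)) ^ n + 1).natDegree := hXn.symm
        _ ≤ _ := natDegree_le_of_dvd hdvd hf0
    have hlt : p ^ j + (m - 1) * p ^ (j + 1) < n := by
      have : (m - 1) * p ^ (j + 1) + p ^ (j + 1) = n := by
        rw [hn, mul_comm (p ^ (j+1)) m]
        have : m - 1 + 1 = m := Nat.succ_pred_eq_of_pos (lt_trans one_pos hm)
        nlinarith [this]
      omega
    omega
  · rw [← RingHom.map_mul]
    have : (1 + (X : Polynomial (ZMod 2)) ^ p ^ (j+1)) * ((1 + X ^ p ^ j) * S) =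
        (X ^ n + 1) * (1 + X ^ p ^ j) := by
      rw [mul_left_comm, key]; ring
    rw [this]
    refine Ideal.Quotient.eq_zero_iff_mem.mpr ?_
    exact Ideal.mem_span_singleton.mpr ⟨1 + X ^ p ^ j, rfl⟩
end

section
/- Let p be an odd prime, j ≥ 0, m > 1 with gcd(p, m) = 1, n = p^{j+1}m, and τ = p^j m. Then the polynomial x(α) = ⊕_{i=0}^{m-1} (α^{i·p^{j+1}} ⊕ α^{p^j + i·p^{j+1}}) in GF(2)[α]/(α^n + 1) is divisible by 1 + α^τ. -/
open Polynomial Finset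

lemma one_add_X_pow_dvd_pair (τ a b : ℕ) (h : a ≡ b [MOD τ]) :
    (1 + X ^ τ : Polynomial (ZMod 2)) ∣ X ^ a + X ^ b := by
  wlog hab : a ≤ b generalizing a b
  · rw [add_comm (X ^ a)]
    exact this b a h.symm (le_of_not_ge hab)
  obtain ⟨d, hd⟩ := (Nat.modEq_iff_dvd' hab).mp h
  have hb : b = a + τ * d := by omega
  subst hb
  have h1 : (X ^ τ - 1 : Polynomial (ZMod 2)) ∣ (X ^ τ) ^ d - 1 ^ d :=
    sub_dvd_pow_sub_pow _ _ _
  have h2 : (1 + X ^ τ : Polynomial (ZMod 2)) = X ^ τ - 1 := by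
    rw [CharTwo.sub_eq_add, add_comm]
  have h3 : (X ^ a + X ^ (a + τ * d) : Polynomial (ZMod 2))
      = X ^ a * ((X ^ τ) ^ d - 1 ^ d) := by
    rw [one_pow, mul_sub, mul_one, ← pow_mul, ← pow_add, CharTwo.sub_eq_add, add_comm]
  rw [h2, h3]
  exact Dvd.dvd.mul_left h1 _

theorem stmt_3 (p j m n τ : ℕ) (hp : p.Prime) (hodd : Odd p) (hm : 1 < m)
    (hco : Nat.Coprime p m) (hn : n = p ^ (j + 1) * m) (hτ : τ = p ^ j * m) :
    pr n (1 + X ^ τ) ∣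
      pr n (∑ i ∈ Finset.range m,
        (X ^ (i * p ^ (j + 1)) + X ^ (p ^ j + i * p ^ (j + 1)))) := by
  haveI : NeZero m := ⟨by omega⟩
  set c : ℕ := (-(p : ZMod m)⁻¹).val with hc
  have hunit : IsUnit (p : ZMod m) := (ZMod.isUnit_iff_coprime p m).mpr hco
  have hdvd : m ∣ 1 + c * p := by
    have h0 : ((1 + c * p : ℕ) : ZMod m) = 0 := by
      push_cast
      rw [hc, ZMod.natCast_val, ZMod.cast_id]
      rw [neg_mul, ZMod.inv_mul_of_unit _ hunit]
      ring
    exact (ZMod.natCast_eq_zero_iff _ _).mp h0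
  -- key modular congruence for each i
  have hcong : ∀ i : ℕ, i * p ^ (j + 1) ≡ p ^ j + ((i + c) % m) * p ^ (j + 1) [MOD τ] := by
    intro i
    have hmm : i * p ≡ 1 + ((i + c) % m) * p [MOD m] := by
      have h2 : (i + c) % m ≡ i + c [MOD m] := Nat.mod_modEq _ _
      have h3 : 1 + ((i + c) % m) * p ≡ 1 + (i + c) * p [MOD m] :=
        Nat.ModEq.add_left 1 (h2.mul_right p)
      have h4 : 1 + (i + c) * p = (1 + c * p) + i * p := by ring
      have h5 : (1 + c * p) + i * p ≡ 0 + i * p [MOD m] :=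
        Nat.ModEq.add_right _ (Nat.modEq_zero_iff_dvd.mpr hdvd)
      calc i * p = 0 + i * p := by ring
        _ ≡ (1 + c * p) + i * p [MOD m] := h5.symm
        _ = 1 + (i + c) * p := by ring
        _ ≡ 1 + ((i + c) % m) * p [MOD m] := h3.symm
    have := Nat.ModEq.mul_left' (c := p ^ j) hmm
    have e1 : p ^ j * (i * p) = i * p ^ (j + 1) := by ring
    have e2 : p ^ j * (1 + ((i + c) % m) * p) = p ^ j + ((i + c) % m) * p ^ (j + 1) := by ring
    rw [e1, e2, ← hτ] at this
    exact this
  -- reindex the second sum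
  have hre : ∑ i ∈ range m, (X : Polynomial (ZMod 2)) ^ (p ^ j + i * p ^ (j + 1))
      = ∑ i ∈ range m, (X : Polynomial (ZMod 2)) ^ (p ^ j + ((i + c) % m) * p ^ (j + 1)) := by
    rw [← Fin.sum_univ_eq_sum_range, ← Fin.sum_univ_eq_sum_range]
    rw [← Equiv.sum_comp (Equiv.addRight (Fin.ofNat m c))
      (fun i : Fin m => (X : Polynomial (ZMod 2)) ^ (p ^ j + i.val * p ^ (j + 1)))]
    apply Finset.sum_congr rfl
    intro i _
    have hv : ((Equiv.addRight (Fin.ofNat m c)) i).val = (i.val + c) % m := by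
      simp only [Equiv.coe_addRight, Fin.add_def, Fin.val_ofNat]
      conv_rhs => rw [Nat.add_mod, Nat.mod_eq_of_lt i.isLt]
    rw [hv]
  have hpoly : (1 + X ^ τ : Polynomial (ZMod 2)) ∣
      ∑ i ∈ range m, (X ^ (i * p ^ (j + 1)) + X ^ (p ^ j + i * p ^ (j + 1))) := by
    rw [Finset.sum_add_distrib, hre, ← Finset.sum_add_distrib]
    exact Finset.dvd_sum fun i _ => one_add_X_pow_dvd_pair τ _ _ (hcong i)
  exact map_dvd (pr n) hpoly
end

section
/- Let p, m be coprime positive integers with m > 1, and let ℓ satisfy pℓ ≡ -1 (mod m). Fix j ≥ 0 and set τ = p^j m. Define f(i·p^{j+1}) = p^j + ((ℓ + i) mod m)·p^{j+1} for 0 ≤ i ≤ m-1. Then f is a bijection from G = {i·p^{j+1} : 0 ≤ i ≤ m-1} to the coset p^j + G, and f(i·p^{j+1}) ≡ i·p^{j+1} (mod τ) for all 0 ≤ i ≤ m-1. -/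
theorem stmt_5 (p m ℓ j : ℕ) (hp : 0 < p) (hm : 1 < m) (hco : Nat.Coprime p m)
    (hℓ : ℓ < m) (hℓ1 : ((p * ℓ : ℤ)) ≡ -1 [ZMOD (m : ℤ)]) :
    Set.InjOn
      (fun i : ℕ => ((p ^ j + ((ℓ + i) % m) * p ^ (j + 1) : ℕ) : ZMod (p ^ (j + 1) * m)))
      (Set.Iio m) ∧
    (fun i : ℕ => ((p ^ j + ((ℓ + i) % m) * p ^ (j + 1) : ℕ) : ZMod (p ^ (j + 1) * m))) ''
        Set.Iio m =
      (fun i : ℕ => ((p ^ j + i * p ^ (j + 1) : ℕ) : ZMod (p ^ (j + 1) * m))) '' Set.Iio m ∧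
    ∀ i < m, ((p ^ j * m : ℕ) : ℤ) ∣
      ((p ^ j + ((ℓ + i) % m) * p ^ (j + 1) : ℕ) : ℤ) - (i : ℤ) * p ^ (j + 1) := by
  have hP : p ^ (j + 1) ≠ 0 := pow_ne_zero _ hp.ne'
  refine ⟨?_, ?_, ?_⟩
  · -- injectivity
    intro i₁ hi₁ i₂ hi₂ h
    simp only [Set.mem_Iio] at hi₁ hi₂
    rw [ZMod.natCast_eq_natCast_iff] at h
    have h2 : ((ℓ + i₁) % m) * p ^ (j + 1) ≡ ((ℓ + i₂) % m) * p ^ (j + 1)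
        [MOD p ^ (j + 1) * m] := Nat.ModEq.add_left_cancel' _ h
    rw [mul_comm (p ^ (j + 1)) m] at h2
    have h3 : (ℓ + i₁) % m ≡ (ℓ + i₂) % m [MOD m] := Nat.ModEq.mul_right_cancel' hP h2
    have h4 : ℓ + i₁ ≡ ℓ + i₂ [MOD m] :=
      ((Nat.mod_modEq _ m).symm.trans h3).trans (Nat.mod_modEq _ m)
    have h5 : i₁ ≡ i₂ [MOD m] := Nat.ModEq.add_left_cancel' ℓ h4
    unfold Nat.ModEq at h5
    rw [Nat.mod_eq_of_lt hi₁, Nat.mod_eq_of_lt hi₂] at h5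
    exact h5
  · -- image equality
    ext x
    simp only [Set.mem_image, Set.mem_Iio]
    constructor
    · rintro ⟨i, hi, rfl⟩
      exact ⟨(ℓ + i) % m, Nat.mod_lt _ (by omega), rfl⟩
    · rintro ⟨i, hi, rfl⟩
      refine ⟨(i + (m - ℓ)) % m, Nat.mod_lt _ (by omega), ?_⟩
      have key : (ℓ + (i + (m - ℓ)) % m) % m = i := by
        have h1 : ℓ + (i + (m - ℓ)) % m ≡ ℓ + (i + (m - ℓ)) [MOD m] :=
          (Nat.mod_modEq _ m).add_left ℓ
        have h2 : ℓ + (i + (m - ℓ)) = i + m := by omega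
        have h3 : ℓ + (i + (m - ℓ)) % m ≡ i [MOD m] := by
          rw [h2] at h1
          exact h1.trans (by simpa using (Nat.add_modEq_right (a := i) (n := m)))
        unfold Nat.ModEq at h3
        rw [Nat.mod_eq_of_lt hi] at h3
        omega
      rw [key]
  · -- congruence
    intro i hi
    have h1 : (((ℓ + i) % m : ℕ) : ℤ) ≡ ((ℓ : ℤ) + i) [ZMOD (m : ℤ)] := by
      push_cast
      exact (Int.emod_emod_of_dvd _ dvd_rfl)
    have h2 : (1 + (p : ℤ) * ((ℓ + i) % m : ℕ) - p * i) ≡ 1 + (p : ℤ) * ((ℓ : ℤ) + i) - p * i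
        [ZMOD (m : ℤ)] := ((h1.mul_left p).add_left 1).sub_right _
    have h3 : (1 : ℤ) + (p : ℤ) * ((ℓ : ℤ) + i) - p * i = 1 + p * ℓ := by ring
    have h4 : (1 + (p : ℤ) * ((ℓ + i) % m : ℕ) - p * i) ≡ 0 [ZMOD (m : ℤ)] := by
      rw [h3] at h2
      exact h2.trans (by simpa using hℓ1.add_left 1)
    have h5 : (m : ℤ) ∣ (1 + (p : ℤ) * ((ℓ + i) % m : ℕ) - p * i) :=
      (Int.modEq_zero_iff_dvd).mp h4
    obtain ⟨c, hc⟩ := h5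
    refine ⟨c, ?_⟩
    set a := (ℓ + i) % m with ha
    push_cast
    linear_combination (p : ℤ) ^ j * hc
end

section
/- Let p be an odd prime, j ≥ 0, n = p^{j+1}, τ = p^j, and let i = u·p^s where gcd(u, p) = 1, 1 ≤ u ≤ p^{j+1-s} - 1, and 1 ≤ s ≤ j. If x(α) ∈ GF(2)[α]/(α^n + 1) is divisible by 1 + α^τ and satisfies (1 + α^i)·x(α) = 0, then x(α) = 0. -/
open Polynomial Finset

theorem dvd_lem (a b : ℕ) (h : a ∣ b) : (X ^ a - 1 : Polynomial (ZMod 2)) ∣ X ^ b - 1 := by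
  obtain ⟨c, rfl⟩ := h
  rw [pow_mul]
  simpa using sub_dvd_pow_sub_pow (X ^ a : Polynomial (ZMod 2)) 1 c

theorem gcd_lem (q : Polynomial (ZMod 2)) : ∀ a b : ℕ, q ∣ X ^ a - 1 → q ∣ X ^ b - 1 →
    q ∣ X ^ (Nat.gcd a b) - 1 := by
  intro a
  induction a using Nat.strong_induction_on with
  | _ a ih =>
    intro b ha hb
    rcases Nat.eq_zero_or_pos a with rfl | hpos
    · simpa using hb
    · rw [Nat.gcd_rec]
      refine ih (b % a) (Nat.mod_lt _ hpos) a ?_ ha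
      have key : (X ^ b - 1 : Polynomial (ZMod 2)) =
          X ^ (b % a) * (X ^ (a * (b / a)) - 1) + (X ^ (b % a) - 1) := by
        ring_nf
        rw [← pow_add]
        rw [Nat.mod_add_div b a]
      have h1 : q ∣ X ^ (a * (b / a)) - 1 := ha.trans (dvd_lem _ _ ⟨_, rfl⟩)
      have : q ∣ X ^ (b % a) * (X ^ (a * (b / a)) - 1) + (X ^ (b % a) - 1) := key ▸ hb
      exact (dvd_add_right (Dvd.dvd.mul_left h1 _)).mp this

theorem stmt_7 (p j s u n τ : ℕ) (hp : p.Prime) (hodd : Odd p)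
    (hs1 : 1 ≤ s) (hsj : s ≤ j) (hu : Nat.Coprime u p)
    (hu1 : 1 ≤ u) (hu2 : u ≤ p ^ (j + 1 - s) - 1)
    (hn : n = p ^ (j + 1)) (hτ : τ = p ^ j)
    (x : R2 n) (hdvd : pr n (1 + X ^ τ) ∣ x)
    (hker : (1 + (pr n X) ^ (u * p ^ s)) * x = 0) :
    x = 0 := by
  classical
  set i := u * p ^ s with hi
  have hchar : ∀ m : ℕ, (1 + X ^ m : Polynomial (ZMod 2)) = X ^ m - 1 := by
    intro m; rw [CharTwo.sub_eq_add, add_comm]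
  obtain ⟨y, hy⟩ := hdvd
  obtain ⟨Y, rfl⟩ := Ideal.Quotient.mk_surjective y
  have hτ0 : τ ≠ 0 := by
    rw [hτ]; exact pow_ne_zero _ hp.pos.ne'
  have hn0 : n ≠ 0 := by
    rw [hn]; exact pow_ne_zero _ hp.pos.ne'
  -- divisibility in the polynomial ring
  have hmem : ((X : Polynomial (ZMod 2)) ^ n + 1) ∣ (1 + X ^ i) * ((1 + X ^ τ) * Y) := by
    have h0 : pr n ((1 + X ^ i) * ((1 + X ^ τ) * Y)) = 0 := by
      have hy' : x = pr n (1 + X ^ τ) * pr n Y := hy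
      rw [map_mul, map_mul, ← hy', map_add, map_one, map_pow, hker]
    rwa [show pr n ((1 + X ^ i) * ((1 + X ^ τ) * Y)) =
        Ideal.Quotient.mk _ ((1 + X ^ i) * ((1 + X ^ τ) * Y)) from rfl,
      Ideal.Quotient.eq_zero_iff_mem, Ideal.mem_span_singleton] at h0
  -- switch to subtraction form
  have hNeq : ((X : Polynomial (ZMod 2)) ^ n + 1) = X ^ n - 1 := by
    rw [CharTwo.sub_eq_add]
  set Φ : Polynomial (ZMod 2) := ∑ l ∈ range p, (X ^ τ) ^ l with hΦdef
  have hτp : τ * p = n := by rw [hτ, hn, pow_succ]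
  have hNfac : (X ^ τ - 1 : Polynomial (ZMod 2)) * Φ = X ^ n - 1 := by
    rw [mul_comm, hΦdef, geom_sum_mul, ← pow_mul, hτp]
  have htne : (X ^ τ - 1 : Polynomial (ZMod 2)) ≠ 0 := by
    have := monic_X_pow_sub_C (1 : ZMod 2) hτ0
    rw [map_one] at this
    exact this.ne_zero
  -- squarefreeness of X^n - 1
  have hncast : ((n : ZMod 2)) ≠ 0 := by
    have hoddn : Odd n := by rw [hn]; exact hodd.pow
    intro h
    have h2 : (2 : ℕ) ∣ n := (ZMod.natCast_eq_zero_iff n 2).mp h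
    exact (Nat.not_even_iff_odd.mpr hoddn) (even_iff_two_dvd.mpr h2)
  have hsq : Squarefree ((X : Polynomial (ZMod 2)) ^ n - 1) := by
    have := Polynomial.separable_X_pow_sub_C (F := ZMod 2) (n := n) 1 hncast one_ne_zero
    rw [map_one] at this
    exact this.squarefree
  -- from hmem: Φ ∣ (X^i - 1) * Y
  have hΦdvd : Φ ∣ (X ^ i - 1) * Y := by
    have h1 : (X ^ τ - 1 : Polynomial (ZMod 2)) * Φ ∣
        (X ^ τ - 1) * ((X ^ i - 1) * Y) := by
      rw [hNfac]
      have : (1 + X ^ i : Polynomial (ZMod 2)) * ((1 + X ^ τ) * Y) =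
          (X ^ τ - 1) * ((X ^ i - 1) * Y) := by
        rw [hchar, hchar]; ring
      rw [← this, ← hNeq]
      exact hmem
    exact (mul_dvd_mul_iff_left htne).mp h1
  -- coprimality of Φ and X^i - 1
  have hcop : IsCoprime Φ ((X : Polynomial (ZMod 2)) ^ i - 1) := by
    rw [← EuclideanDomain.gcd_isUnit_iff]
    set d := EuclideanDomain.gcd Φ ((X : Polynomial (ZMod 2)) ^ i - 1) with hd
    have hdΦ : d ∣ Φ := EuclideanDomain.gcd_dvd_left _ _
    have hdi : d ∣ X ^ i - 1 := EuclideanDomain.gcd_dvd_right _ _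
    have hdn : d ∣ (X : Polynomial (ZMod 2)) ^ n - 1 :=
      hdΦ.trans ⟨X ^ τ - 1, by rw [← hNfac]; ring⟩
    have hdg : d ∣ (X : Polynomial (ZMod 2)) ^ (Nat.gcd i n) - 1 := gcd_lem d i n hdi hdn
    have hgcd : Nat.gcd i n = p ^ s := by
      rw [hi, hn, Nat.Coprime.gcd_mul_left_cancel _ (hu.pow_right _)]
      exact Nat.gcd_eq_left (pow_dvd_pow p (by omega))
    have hpsτ : p ^ s ∣ τ := by rw [hτ]; exact pow_dvd_pow p hsj
    have hdτ : d ∣ (X : Polynomial (ZMod 2)) ^ τ - 1 := by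
      rw [hgcd] at hdg
      exact hdg.trans (dvd_lem _ _ hpsτ)
    have : d * d ∣ (X : Polynomial (ZMod 2)) ^ n - 1 := by
      rw [← hNfac]; exact mul_dvd_mul hdτ hdΦ
    exact hsq d this
  have hΦY : Φ ∣ Y := hcop.dvd_of_dvd_mul_left hΦdvd
  -- conclude
  obtain ⟨Z, rfl⟩ := hΦY
  have hfin : ((X : Polynomial (ZMod 2)) ^ n + 1) ∣ (1 + X ^ τ) * (Φ * Z) := by
    rw [hNeq, hchar, ← mul_assoc, hNfac]
    exact Dvd.intro _ rfl
  rw [hy]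
  have : pr n ((1 + X ^ τ) * (Φ * Z)) = 0 := by
    rw [show pr n ((1 + X ^ τ) * (Φ * Z)) =
        Ideal.Quotient.mk _ ((1 + X ^ τ) * (Φ * Z)) from rfl,
      Ideal.Quotient.eq_zero_iff_mem, Ideal.mem_span_singleton]
    exact hfin
  rw [map_mul] at this
  exact this
end

section
/- Let p be an odd prime and n = pτ with τ = p^j for some j ≥ 0. For every i with 1 ≤ i ≤ n-1, the only x(α) ∈ GF(2)[α]/(α^n + 1) divisible by 1 + α^τ satisfying (1 + α^i)·x(α) = 0 is x(α) = 0. -/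
open Polynomial Finset

theorem stmt_13 (p j n τ : ℕ) (hp : p.Prime) (hodd : Odd p)
    (hτ : τ = p ^ j) (hn : n = p * τ) :
    ∀ i : ℕ, 1 ≤ i → i ≤ n - 1 →
      ∀ x : R2 n, pr n (1 + X ^ τ) ∣ x →
        (1 + (pr n X) ^ i) * x = 0 → x = 0 := by
  classical
  have hchar : ∀ k : ℕ, (X ^ k + 1 : (ZMod 2)[X]) = X ^ k - 1 := by
    intro k; rw [sub_eq_add_neg, CharTwo.neg_eq]
  intro i hi1 hi2 x hdvd hann
  -- n is odd and positive
  have hτodd : Odd τ := hτ ▸ hodd.pow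
  have hnodd : Odd n := hn ▸ hodd.mul hτodd
  have hnpos : 0 < n := hnodd.pos
  -- lift x
  obtain ⟨c, rfl⟩ := hdvd
  obtain ⟨y, rfl⟩ := Ideal.Quotient.mk_surjective c
  set g : (ZMod 2)[X] := X ^ n - 1 with hg
  have hsq : Squarefree g := by
    refine (Polynomial.X_pow_sub_one_separable_iff.mpr ?_).squarefree
    rw [Ne, ZMod.natCast_eq_zero_iff]
    exact fun h => (Nat.not_even_iff_odd.mpr hnodd) (even_iff_two_dvd.mpr h)
  -- translate hypothesis and goal into divisibility in (ZMod 2)[X]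
  have hmk : ∀ q : (ZMod 2)[X], pr n q = Ideal.Quotient.mk _ q := fun _ => rfl
  have hann' : g ∣ (X ^ i - 1) * ((X ^ τ - 1) * y) := by
    rw [← hchar i, ← hchar τ, hg, ← hchar n]
    rw [← Ideal.mem_span_singleton, ← Ideal.Quotient.eq_zero_iff_mem]
    have : (Ideal.Quotient.mk (Ideal.span {(X : (ZMod 2)[X]) ^ n + 1}))
        ((X ^ i + 1) * ((X ^ τ + 1) * y)) = (1 + (pr n X) ^ i) * (pr n (1 + X ^ τ) * pr n y) := by
      simp [pr, map_mul, map_add, map_pow, add_comm]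
    rw [this]; exact hann
  suffices hfin : g ∣ (X ^ τ - 1) * y by
    have : (Ideal.Quotient.mk (Ideal.span {(X : (ZMod 2)[X]) ^ n + 1}))
        ((X ^ τ + 1) * y) = 0 := by
      rw [Ideal.Quotient.eq_zero_iff_mem, Ideal.mem_span_singleton, hchar n, hchar τ]
      exact hfin
    calc pr n (1 + X ^ τ) * pr n y = Ideal.Quotient.mk _ ((X ^ τ + 1) * y) := by
          simp [pr, map_mul, map_add, map_pow, add_comm]
      _ = 0 := this
  -- gcd setup
  set a : (ZMod 2)[X] := X ^ i - 1 with ha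
  set u : (ZMod 2)[X] := EuclideanDomain.gcd g a with hu
  have hug : u ∣ g := EuclideanDomain.gcd_dvd_left g a
  have hua : u ∣ a := EuclideanDomain.gcd_dvd_right g a
  obtain ⟨v, hgv⟩ := hug
  -- d = gcd n i divides τ
  set d : ℕ := Nat.gcd n i with hd
  have hdτ : d ∣ τ := by
    have hdn : d ∣ n := Nat.gcd_dvd_left n i
    have hdlt : d < n := by
      have : d ≤ i := Nat.le_of_dvd hi1 (Nat.gcd_dvd_right n i)
      omega
    have hnp : n = p ^ (j + 1) := by rw [hn, hτ, pow_succ, mul_comm]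
    obtain ⟨k, hk, hdk⟩ := (Nat.dvd_prime_pow hp).mp (hnp ▸ hdn)
    have hkj : k ≤ j := by
      rcases Nat.lt_or_ge k (j+1) with h | h
      · omega
      · exfalso; rw [hdk] at hdlt; rw [hnp] at hdlt
        have := pow_le_pow_right₀ hp.one_lt.le h
        omega
    rw [hdk, hτ]
    exact pow_dvd_pow p hkj
  -- u ∣ X^d - 1
  have hudiv : u ∣ (X ^ d - 1 : (ZMod 2)[X]) := by
    rw [← Ideal.mem_span_singleton, ← Ideal.Quotient.eq_zero_iff_mem]
    set mk := Ideal.Quotient.mk (Ideal.span {u})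
    have hx : ∀ m : ℕ, u ∣ (X ^ m - 1 : (ZMod 2)[X]) → (mk X) ^ m = 1 := by
      intro m hm
      have : mk (X ^ m - 1) = 0 := by
        rw [Ideal.Quotient.eq_zero_iff_mem, Ideal.mem_span_singleton]; exact hm
      rw [map_sub, map_pow, map_one, sub_eq_zero] at this
      exact this
    have h1 : (mk X) ^ n = 1 := hx n (EuclideanDomain.gcd_dvd_left g a)
    have h2 : (mk X) ^ i = 1 := hx i hua
    have : (mk X) ^ Nat.gcd n i = 1 := pow_gcd_eq_one.mpr ⟨h1, h2⟩
    rw [map_sub, map_pow, map_one, sub_eq_zero]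
    exact this
  have hdτpoly : (X ^ d - 1 : (ZMod 2)[X]) ∣ X ^ τ - 1 := by
    obtain ⟨m, hm⟩ := hdτ
    have := sub_dvd_pow_sub_pow (X ^ d : (ZMod 2)[X]) 1 m
    rwa [← pow_mul, one_pow, ← hm] at this
  -- coprimality helpers
  have hcop : ∀ w s t : (ZMod 2)[X], w ∣ s → w ∣ t → s * t = g → IsUnit w := by
    intro w s t hws hwt hst
    exact hsq w (hst ▸ mul_dvd_mul hws hwt)
  have hcopuv : IsCoprime u v := by
    rw [← EuclideanDomain.gcd_isUnit_iff]
    exact hcop _ _ _ (EuclideanDomain.gcd_dvd_left u v) (EuclideanDomain.gcd_dvd_right u v) hgv.symm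
  have hcopva : IsCoprime v a := by
    rw [← EuclideanDomain.gcd_isUnit_iff]
    refine hcop _ u v ?_ (EuclideanDomain.gcd_dvd_left v a) hgv.symm
    exact EuclideanDomain.dvd_gcd
      ((EuclideanDomain.gcd_dvd_left v a).trans ((dvd_mul_left v u).trans hgv.symm.dvd))
      (EuclideanDomain.gcd_dvd_right v a)
  -- conclude
  have hvdvd : v ∣ (X ^ τ - 1) * y := by
    have : v ∣ a * ((X ^ τ - 1) * y) := (dvd_mul_left v u |>.trans hgv.symm.dvd).trans hann'
    exact hcopva.dvd_of_dvd_mul_left this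
  have hudvd : u ∣ (X ^ τ - 1) * y :=
    (hudiv.trans hdτpoly).trans (dvd_mul_right _ _)
  rw [hgv]
  exact hcopuv.mul_dvd hudvd hvdvd
end

section
/- Let n = pτ where p is a prime and τ ≥ 1, and suppose either p = 2 and τ > 1, or p is odd and τ is not a power of p. Then there exists i with 1 ≤ i ≤ n-1 and a nonzero x(α) ∈ GF(2)[α]/(α^n + 1) divisible by 1 + α^τ such that (1 + α^i)·x(α) = 0. -/
open Polynomial Finset

private lemma geom2 (c q : ℕ) :
    ((X : Polynomial (ZMod 2)) ^ c + 1) * (∑ ℓ ∈ range q, ((X : Polynomial (ZMod 2)) ^ c) ^ ℓ)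
      = X ^ (c * q) + 1 := by
  have h := geom_sum_mul ((X : Polynomial (ZMod 2)) ^ c) q
  rw [CharTwo.sub_eq_add, CharTwo.sub_eq_add] at h
  rw [mul_comm, h, ← pow_mul]

private lemma Xc_ne_zero {r : ℕ} (hr : 0 < r) : (X : Polynomial (ZMod 2)) ^ r + 1 ≠ 0 := by
  have := Polynomial.X_pow_add_C_ne_zero (R := ZMod 2) hr (1 : ZMod 2)
  simpa using this

private lemma deg_Xc (r : ℕ) (hr : 0 < r) :
    ((X : Polynomial (ZMod 2)) ^ r + 1).degree = r := by
  have := Polynomial.degree_X_pow_add_C (R := ZMod 2) hr (1 : ZMod 2)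
  simpa using this

private lemma not_dvd_pow_add_one {c t : ℕ} (hc : 0 < c) (h : ¬ c ∣ t) :
    ¬ ((X : Polynomial (ZMod 2)) ^ c + 1 ∣ X ^ t + 1) := by
  intro hdvd
  set r := t % c with hrdef
  have hr0 : 0 < r := Nat.pos_of_ne_zero (fun h0 => h (Nat.dvd_of_mod_eq_zero h0))
  have hrc : r < c := Nat.mod_lt _ hc
  obtain ⟨d, hd⟩ : ∃ d, t = c * d + r := ⟨t / c, (Nat.div_add_mod t c).symm⟩
  have two : (2 : Polynomial (ZMod 2)) = 0 := CharTwo.two_eq_zero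
  have key : (X : Polynomial (ZMod 2)) ^ t + 1
      = X ^ r * (X ^ (c * d) + 1) + (X ^ r + 1) := by
    rw [hd, pow_add]
    linear_combination (-(X : Polynomial (ZMod 2)) ^ r) * two
  have hdvd2 : ((X : Polynomial (ZMod 2)) ^ c + 1) ∣ X ^ r * (X ^ (c * d) + 1) := by
    refine Dvd.dvd.mul_left ?_ _
    exact ⟨_, (geom2 c d).symm⟩
  have hdvd3 : ((X : Polynomial (ZMod 2)) ^ c + 1) ∣ X ^ r + 1 := by
    have := hdvd.sub hdvd2
    rwa [key, add_sub_cancel_left] at this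
  have := Polynomial.eq_zero_of_dvd_of_degree_lt hdvd3 (by
    rw [deg_Xc r hr0, deg_Xc c hc]
    exact_mod_cast hrc)
  exact Xc_ne_zero hr0 this

theorem stmt_14 (p τ n : ℕ) (hp : p.Prime) (hτ : 1 ≤ τ) (hn : n = p * τ)
    (h : (p = 2 ∧ 1 < τ) ∨ (Odd p ∧ ∀ j : ℕ, τ ≠ p ^ j)) :
    ∃ i : ℕ, 1 ≤ i ∧ i ≤ n - 1 ∧
      ∃ x : R2 n, x ≠ 0 ∧ pr n (1 + X ^ τ) ∣ x ∧
        (1 + (pr n X) ^ i) * x = 0 := by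
  have hzero : ∀ y : Polynomial (ZMod 2),
      ((X : Polynomial (ZMod 2)) ^ n + 1) ∣ y → pr n y = 0 := fun y hy =>
    (Ideal.Quotient.eq_zero_iff_dvd _ _).2 hy
  have hnz : ∀ y : Polynomial (ZMod 2),
      ¬ ((X : Polynomial (ZMod 2)) ^ n + 1) ∣ y → pr n y ≠ 0 := fun y hy hc =>
    hy ((Ideal.Quotient.eq_zero_iff_dvd _ _).1 hc)
  rcases h with ⟨hp2, hτ2⟩ | ⟨hodd, hpow⟩
  · -- p = 2
    subst hp2
    have hn2 : n = 2 * τ := hn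
    refine ⟨τ, hτ, by omega, pr n (1 + X ^ τ), ?_, dvd_refl _, ?_⟩
    · refine hnz _ ?_
      intro hdvd
      have hdeg : ((1 : Polynomial (ZMod 2)) + X ^ τ).degree
          < ((X : Polynomial (ZMod 2)) ^ n + 1).degree := by
        rw [add_comm (1 : Polynomial (ZMod 2)), deg_Xc τ (by omega), deg_Xc n (by omega)]
        exact_mod_cast (by omega : τ < n)
      have := Polynomial.eq_zero_of_dvd_of_degree_lt hdvd hdeg
      rw [add_comm] at this
      exact Xc_ne_zero (by omega : 0 < τ) this
    · have e1 : (1 + (pr n X) ^ τ) = pr n (1 + X ^ τ) := by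
        simp [map_add, map_pow, map_one]
      rw [e1, ← map_mul]
      refine hzero _ ?_
      have : ((1 : Polynomial (ZMod 2)) + X ^ τ) * (1 + X ^ τ) = X ^ n + 1 := by
        rw [← sq, add_pow_char, one_pow, ← pow_mul, hn2, mul_comm τ 2, add_comm]
      rw [this]
  · -- p odd
    have hτ0 : τ ≠ 0 := by omega
    have hppos : 0 < p := hp.pos
    set k := τ.factorization p with hk
    set c := p ^ (k + 1) with hc
    have hcpos : 0 < c := pow_pos hppos _
    have hkd : p ^ k ∣ τ := Nat.ordProj_dvd τ p
    have hcnd : ¬ c ∣ τ := Nat.pow_succ_factorization_not_dvd hτ0 hp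
    have hklt : p ^ k < τ :=
      lt_of_le_of_ne (Nat.le_of_dvd (by omega) hkd) (fun h => hpow k h.symm)
    have hcn : c ∣ n := by
      rw [hn, hc, pow_succ, mul_comm (p ^ k) p]
      exact mul_dvd_mul_left p hkd
    have hcltn : c < n := by
      rw [hn, hc, pow_succ, mul_comm (p ^ k) p]
      exact mul_lt_mul_of_pos_left hklt hppos
    set q := n / c with hq
    have hcq : c * q = n := Nat.mul_div_cancel' hcn
    set S : Polynomial (ZMod 2) := ∑ ℓ ∈ range q, ((X : Polynomial (ZMod 2)) ^ c) ^ ℓ with hS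
    have hgeom : ((X : Polynomial (ZMod 2)) ^ c + 1) * S = X ^ n + 1 := by
      rw [hS, geom2, hcq]
    have hSne : S ≠ 0 := by
      intro h0
      have : ((X : Polynomial (ZMod 2)) ^ n + 1) = 0 := by rw [← hgeom, h0, mul_zero]
      exact Xc_ne_zero (by omega : 0 < n) this
    refine ⟨c, hcpos, by omega, pr n ((1 + X ^ τ) * S), ?_, ⟨pr n S, by rw [← map_mul]⟩, ?_⟩
    · refine hnz _ ?_
      intro hdvd
      rw [← hgeom] at hdvd
      have hdvd' : ((X : Polynomial (ZMod 2)) ^ c + 1) * S ∣ (X ^ τ + 1) * S := by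
        rwa [add_comm (1 : Polynomial (ZMod 2)) ((X : Polynomial (ZMod 2)) ^ τ)] at hdvd
      have := (mul_dvd_mul_iff_right hSne).1 hdvd'
      exact not_dvd_pow_add_one hcpos hcnd this
    · have e1 : (1 + (pr n X) ^ c) = pr n (1 + X ^ c) := by
        simp [map_add, map_pow, map_one]
      rw [e1, ← map_mul]
      refine hzero _ ?_
      have : ((1 : Polynomial (ZMod 2)) + X ^ c) * ((1 + X ^ τ) * S)
          = (1 + X ^ τ) * (X ^ n + 1) := by
        rw [← hgeom]; ring
      rw [this]
      exact Dvd.intro_left _ rfl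
end
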